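/- arXiv:2404.07037 — 2 statements merged into one kernel-verified Lean document; each statement's English description precedes it below -/
import Mathlib

section
/- Let (U, cs) be a standard closure system with closure operator cl, and let c ∈ U. Then the antichains Bp = {M ∈ Mi(cs) : c ↑ M} and Bm = {cl^b(A) : A is a D-generator of c} ∪ {cl^b({c})} are dual in the distributive lattice (cs^b, ⊆): the filter of Bm and the ideal of Bp partition cs^b. -/
/-- `cl^b(A) = ⋃_{a ∈ A} cl({a})`. -/
def clb {U : Type*} (cl : Set U → Set U) (A : Set U) : Set U := ⋃ a ∈ A, cl {a}

/-- The closure operator of a closure system `cs`. -/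
def clOf {U : Type*} (cs : Set (Set U)) (A : Set U) : Set U :=
  ⋂₀ {F | F ∈ cs ∧ A ⊆ F}

/-- A closure system is standard if `cl({a}) \ {a}` is closed for every `a`. -/
def IsStandard {U : Type*} (cs : Set (Set U)) : Prop :=
  ∀ a : U, clOf cs {a} \ {a} ∈ cs

/-- `A` is a minimal generator of `c`. -/
def MinGen {U : Type*} (cl : Set U → Set U) (c : U) (A : Set U) : Prop :=
  c ∉ A ∧ c ∈ cl A ∧ ∀ A' ⊂ A, c ∉ cl A'

/-- `A` is a `D`-generator of `c`. -/
def DGen {U : Type*} (cl : Set U → Set U) (c : U) (A : Set U) : Prop :=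
  MinGen cl c A ∧ c ∉ clb cl A ∧
    ∀ A', MinGen cl c A' → A' ⊆ clb cl A → A' = A

/-- `M` is a meet-irreducible element of `cs`. -/
def MeetIrred {U : Type*} (cs : Set (Set U)) (M : Set U) : Prop :=
  M ∈ cs ∧ M ≠ Set.univ ∧
    ∀ F₁ ∈ cs, ∀ F₂ ∈ cs, F₁ ∩ F₂ = M → F₁ = M ∨ F₂ = M

/-- `c ↑ M`: `c ∉ M` and `c ∈ F` for every closed set `F` strictly above `M`. -/
def Upp {U : Type*} (cs : Set (Set U)) (c : U) (M : Set U) : Prop :=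
  c ∉ M ∧ ∀ F ∈ cs, M ⊂ F → c ∈ F

section Aux
variable {U : Type*} (cs : Set (Set U))

lemma subset_clOf (A : Set U) : A ⊆ clOf cs A := by
  intro x hx
  exact fun F hF => hF.2 hx

lemma clOf_subset {A F : Set U} (hF : F ∈ cs) (hAF : A ⊆ F) : clOf cs A ⊆ F :=
  Set.sInter_subset_of_mem ⟨hF, hAF⟩

lemma sInter_mem [Fintype U] (huniv : Set.univ ∈ cs)
    (hinter : ∀ F₁ ∈ cs, ∀ F₂ ∈ cs, F₁ ∩ F₂ ∈ cs) :
    ∀ S : Set (Set U), S ⊆ cs → ⋂₀ S ∈ cs := by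
  intro S
  refine @Set.Finite.induction_on _ (fun s _ => s ⊆ cs → ⋂₀ s ∈ cs) S (Set.toFinite S) ?_ ?_
  · intro _; simpa using huniv
  · intro a s _ _ ih hsub
    rw [Set.sInter_insert]
    exact hinter a (hsub (Set.mem_insert a s)) _ (ih fun x hx => hsub (Set.mem_insert_of_mem a hx))

lemma clOf_mem [Fintype U] (huniv : Set.univ ∈ cs)
    (hinter : ∀ F₁ ∈ cs, ∀ F₂ ∈ cs, F₁ ∩ F₂ ∈ cs) (A : Set U) : clOf cs A ∈ cs :=
  sInter_mem cs huniv hinter _ (fun _ hF => hF.1)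

lemma clOf_mono {A B : Set U} (h : A ⊆ B) : clOf cs A ⊆ clOf cs B := by
  intro x hx F hF
  exact hx F ⟨hF.1, h.trans hF.2⟩

lemma mem_clb {cl : Set U → Set U} {A : Set U} {x : U} :
    x ∈ clb cl A ↔ ∃ a ∈ A, x ∈ cl {a} := by
  simp [clb]

lemma subset_clb (A : Set U) : A ⊆ clb (clOf cs) A := by
  intro a ha
  exact mem_clb.mpr ⟨a, ha, subset_clOf cs {a} rfl⟩

lemma clOf_single_trans [Fintype U] (huniv : Set.univ ∈ cs)
    (hinter : ∀ F₁ ∈ cs, ∀ F₂ ∈ cs, F₁ ∩ F₂ ∈ cs) {a b : U}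
    (h : b ∈ clOf cs {a}) : clOf cs {b} ⊆ clOf cs {a} :=
  clOf_subset cs (clOf_mem cs huniv hinter _) (by simpa using h)

lemma clb_sub_of_sub [Fintype U] (huniv : Set.univ ∈ cs)
    (hinter : ∀ F₁ ∈ cs, ∀ F₂ ∈ cs, F₁ ∩ F₂ ∈ cs) {A B : Set U}
    (h : A ⊆ clb (clOf cs) B) : clb (clOf cs) A ⊆ clb (clOf cs) B := by
  intro x hx
  obtain ⟨a, ha, hxa⟩ := mem_clb.mp hx
  obtain ⟨b, hb, hab⟩ := mem_clb.mp (h ha)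
  exact mem_clb.mpr ⟨b, hb, clOf_single_trans cs huniv hinter hab hxa⟩

/-- antisymmetry from standardness -/
lemma std_antisymm (hstd : IsStandard cs) {a b : U} (hne : a ≠ b)
    (hba : b ∈ clOf cs {a}) (hab : a ∈ clOf cs {b}) : False := by
  have h1 : clOf cs {b} ⊆ clOf cs {a} \ {a} :=
    clOf_subset cs (hstd a) (by simp [hba, hne.symm])
  exact (h1 hab).2 rfl

end Aux

section Main
variable {U : Type*} [Fintype U] (cs : Set (Set U))
  (huniv : Set.univ ∈ cs)
  (hinter : ∀ F₁ ∈ cs, ∀ F₂ ∈ cs, F₁ ∩ F₂ ∈ cs)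
include huniv hinter

lemma minGen_antichain {c : U} {A : Set U} (hA : MinGen (clOf cs) c A)
    {a b : U} (ha : a ∈ A) (hb : b ∈ A) (hne : a ≠ b) : a ∉ clOf cs {b} := by
  intro h
  have hss : A \ {a} ⊂ A := Set.sdiff_singleton_ssubset.mpr ha
  have hsubF : A ⊆ clOf cs (A \ {a}) := by
    intro x hx
    by_cases hxa : x = a
    · subst hxa
      exact clOf_mono cs (by simp [hb, hne.symm] : ({b} : Set U) ⊆ A \ {x}) h
    · exact subset_clOf cs _ ⟨hx, hxa⟩
  have : clOf cs A ⊆ clOf cs (A \ {a}) :=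
    clOf_subset cs (clOf_mem cs huniv hinter _) hsubF
  exact hA.2.2 _ hss (this hA.2.1)

lemma minGen_sub_of_clb_eq (hstd : IsStandard cs) {c : U} {A A' : Set U}
    (hA : MinGen (clOf cs) c A) (hA' : MinGen (clOf cs) c A')
    (hcl : clb (clOf cs) A' = clb (clOf cs) A) : A' ⊆ A := by
  intro x hx
  obtain ⟨a, ha, hxa⟩ := mem_clb.mp (hcl ▸ subset_clb cs A' hx)
  obtain ⟨a', ha', haa'⟩ := mem_clb.mp (hcl ▸ subset_clb cs A ha : a ∈ clb (clOf cs) A')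
  have hxa' : x ∈ clOf cs {a'} := clOf_single_trans cs huniv hinter haa' hxa
  have hxeq : x = a' := by
    by_contra hne
    exact minGen_antichain cs huniv hinter hA' hx ha' hne hxa'
  subst hxeq
  by_cases hne : x = a
  · exact hne ▸ ha
  · exact absurd haa' (fun h => std_antisymm cs hstd (Ne.symm hne) hxa h)

lemma minGen_eq_of_clb_eq (hstd : IsStandard cs) {c : U} {A A' : Set U}
    (hA : MinGen (clOf cs) c A) (hA' : MinGen (clOf cs) c A')
    (hcl : clb (clOf cs) A' = clb (clOf cs) A) : A' = A :=
  Set.Subset.antisymm (minGen_sub_of_clb_eq cs huniv hinter hstd hA hA' hcl)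
    (minGen_sub_of_clb_eq cs huniv hinter hstd hA' hA hcl.symm)

end Main

/-- in a standard closure system, the antichains
`Bp = {M ∈ Mi(cs) : c ↑ M}` and `Bm = {cl^b(A) : A ∈ genD(c)} ∪ {cl^b({c})}`
are dual in `(cs^b, ⊆)`: the filter of `Bm` and the ideal of `Bp` partition
the family of `cl^b`-closed sets. -/
theorem stmt8 {U : Type*} [Fintype U] (cs : Set (Set U))
    (huniv : Set.univ ∈ cs)
    (hinter : ∀ F₁ ∈ cs, ∀ F₂ ∈ cs, F₁ ∩ F₂ ∈ cs)
    (hstd : IsStandard cs) (c : U)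
    (Bp Bm : Set (Set U))
    (hBp : Bp = {M | MeetIrred cs M ∧ Upp cs c M})
    (hBm : Bm = {G | ∃ A, DGen (clOf cs) c A ∧ G = clb (clOf cs) A} ∪
      {clb (clOf cs) {c}}) :
    ∀ F : Set U, clb (clOf cs) F = F →
      ((∃ B ∈ Bm, B ⊆ F) ↔ ¬ ∃ B ∈ Bp, F ⊆ B) := by
  intro F hF
  constructor
  · rintro ⟨B, hB, hBF⟩ ⟨M, hM, hFM⟩
    rw [hBp] at hM
    obtain ⟨hMi, hupp⟩ := hM
    rw [hBm] at hB
    have hcM : c ∈ M := by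
      rcases hB with ⟨A, hDA, rfl⟩ | hB
      · have hAM : A ⊆ M := fun a ha => hFM (hBF (subset_clb cs A ha))
        exact clOf_subset cs hMi.1 hAM hDA.1.2.1
      · simp only [Set.mem_singleton_iff] at hB
        subst hB
        exact hFM (hBF (subset_clb cs {c} rfl))
    exact hupp.1 hcM
  · intro hno
    by_contra h
    -- c ∉ F
    have hcF : c ∉ F := by
      intro hcF
      have h2 : clb (clOf cs) {c} ⊆ F := by
        have h1 : ({c} : Set U) ⊆ clb (clOf cs) F := fun x hx => by
          rw [hF]; exact hx ▸ hcF
        have := clb_sub_of_sub cs huniv hinter h1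
        rwa [hF] at this
      refine h ⟨clb (clOf cs) {c}, ?_, h2⟩
      rw [hBm]; exact Or.inr rfl
    -- c ∉ clOf cs F
    have hcclF : c ∉ clOf cs F := by
      intro hcclF
      -- minimal generator inside F
      obtain ⟨A, ⟨hAF, hAc⟩, hAmin⟩ :=
        Set.Finite.exists_minimalFor id {A : Set U | A ⊆ F ∧ c ∈ clOf cs A}
          (Set.toFinite _) ⟨F, Set.Subset.rfl, hcclF⟩
      have hMG : MinGen (clOf cs) c A :=
        ⟨fun hc => hcF (hAF hc), hAc, fun A' hss hc =>
          hss.ne (Set.Subset.antisymm (hAmin ⟨hss.subset.trans hAF, hc⟩ hss.subset) hss.subset).symm⟩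
      have hclbA : clb (clOf cs) A ⊆ F := by
        have := clb_sub_of_sub cs huniv hinter (B := F) (hF.symm ▸ hAF)
        rwa [hF] at this
      -- D-generator: minimize clb
      obtain ⟨A0, ⟨hA0MG, hA0F⟩, hA0min⟩ :=
        Set.Finite.exists_minimalFor (clb (clOf cs))
          {A : Set U | MinGen (clOf cs) c A ∧ clb (clOf cs) A ⊆ F}
          (Set.toFinite _) ⟨A, hMG, hclbA⟩
      have hDG : DGen (clOf cs) c A0 := by
        refine ⟨hA0MG, fun hc => hcF (hA0F hc), fun A' hA'MG hA'sub => ?_⟩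
        have hsub : clb (clOf cs) A' ⊆ clb (clOf cs) A0 :=
          clb_sub_of_sub cs huniv hinter hA'sub
        have heq : clb (clOf cs) A0 = clb (clOf cs) A' :=
          Set.Subset.antisymm (hA0min ⟨hA'MG, hsub.trans hA0F⟩ hsub) hsub
        exact minGen_eq_of_clb_eq cs huniv hinter hstd hA0MG hA'MG heq.symm
      refine h ⟨clb (clOf cs) A0, ?_, hA0F⟩
      rw [hBm]; exact Or.inl ⟨A0, hDG, rfl⟩
    -- maximal closed set containing F avoiding c
    obtain ⟨M, ⟨hMcs, hFM, hcM⟩, hMmax⟩ :=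
      Set.Finite.exists_maximalFor id {M : Set U | M ∈ cs ∧ F ⊆ M ∧ c ∉ M}
        (Set.toFinite _) ⟨clOf cs F, clOf_mem cs huniv hinter F, subset_clOf cs F, hcclF⟩
    have hupp : ∀ F' ∈ cs, M ⊂ F' → c ∈ F' := by
      intro F' hF' hss
      by_contra hc
      exact hss.ne (Set.Subset.antisymm hss.subset (hMmax ⟨hF', hFM.trans hss.subset, hc⟩ hss.subset))
    refine hno ⟨M, ?_, hFM⟩
    rw [hBp]
    refine ⟨⟨hMcs, fun heq => hcM (heq ▸ Set.mem_univ c), ?_⟩, hcM, hupp⟩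
    intro F₁ hF₁ F₂ hF₂ hM12
    by_contra hne
    push_neg at hne
    have h1 : M ⊂ F₁ := ⟨hM12 ▸ Set.inter_subset_left, fun hsub =>
      hne.1 (Set.Subset.antisymm (hM12 ▸ Set.inter_subset_left) hsub).symm⟩
    have h2 : M ⊂ F₂ := ⟨hM12 ▸ Set.inter_subset_right, fun hsub =>
      hne.2 (Set.Subset.antisymm (hM12 ▸ Set.inter_subset_right) hsub).symm⟩
    exact hcM (hM12 ▸ ⟨hupp F₁ hF₁ h1, hupp F₂ hF₂ h2⟩)
end

section
/- Let φ = {C_1, …, C_m} be a positive 3-CNF over variables V and construct U = V ∪ {c_1, …, c_{m+1}} and the implicational base I = {{c_i, v} → c_{i+1} : 1 ≤ i ≤ m, v ∈ C_i} ∪ {{v, w} → c_{m+1} : v, w in conflict in φ}. Then the minimal generators of c_{m+1} are exactly: (i) the pairs {v, w} of variables in conflict, and (ii) the inclusion-minimal sets of the form T_i ∪ {c_i} where T_i ⊆ V is a conflict-free 1-in-3 assignment of the clauses C_i, …, C_m. -/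
/-- `F` is closed for the implicational base `I`. -/
def ImpClosed {U : Type*} (I : Set (Set U × U)) (F : Set U) : Prop :=
  ∀ p ∈ I, p.1 ⊆ F → p.2 ∈ F

/-- The closure operator induced by an implicational base `I`. -/
def clI {U : Type*} (I : Set (Set U × U)) (A : Set U) : Set U :=
  ⋂₀ {F | ImpClosed I F ∧ A ⊆ F}

/-- Two (distinct) variables are in conflict if some clause contains both. -/
def Conflict {V : Type*} {m : ℕ} (C : Fin m → Finset V) (v w : V) : Prop :=
  v ≠ w ∧ ∃ j, v ∈ C j ∧ w ∈ C j

/-- `T` is conflict-free (w.r.t. the whole formula). -/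
def ConflictFree {V : Type*} {m : ℕ} (C : Fin m → Finset V) (T : Set V) : Prop :=
  ∀ v ∈ T, ∀ w ∈ T, ¬ Conflict C v w

/-- `T` is a 1-in-3 assignment of the clauses `C_i, …, C_m` (indices `≥ i`). -/
def OneInThreeFrom {V : Type*} {m : ℕ} (C : Fin m → Finset V) (i : Fin m)
    (T : Set V) : Prop :=
  ∀ j : Fin m, i ≤ j → ∃! v : V, v ∈ T ∧ v ∈ C j

/- ## Auxiliary lemmas -/

theorem subset_clI {U : Type*} (I : Set (Set U × U)) (A : Set U) : A ⊆ clI I A :=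
  fun _ hx _ hF => hF.2 hx

theorem impClosed_clI {U : Type*} (I : Set (Set U × U)) (A : Set U) :
    ImpClosed I (clI I A) :=
  fun p hp hsub F hF => hF.1 p hp (fun x hx => hsub hx F hF)

theorem clI_le {U : Type*} (I : Set (Set U × U)) {A F : Set U}
    (h1 : ImpClosed I F) (h2 : A ⊆ F) : clI I A ⊆ F :=
  fun _ hx => hx F ⟨h1, h2⟩

section Aux
variable {V : Type*} {m : ℕ} (C : Fin m → Finset V)

/-- Reachability of the element `c_j` from the set `A` under the implications. -/
def Reach (A : Set (V ⊕ Fin (m + 1))) (j : Fin (m + 1)) : Prop :=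
  Sum.inr j ∈ A ∨
    (j = Fin.last m ∧ ∃ v w : V, Conflict C v w ∧ Sum.inl v ∈ A ∧ Sum.inl w ∈ A) ∨
    (∃ k : Fin m, k.succ ≤ j ∧ Sum.inr k.castSucc ∈ A ∧
      ∀ t : Fin m, k ≤ t → t.succ ≤ j → ∃ v ∈ C t, Sum.inl v ∈ A)

variable (I : Set (Set (V ⊕ Fin (m + 1)) × (V ⊕ Fin (m + 1))))
variable (hI : I =
      {p | ∃ (i : Fin m) (v : V), v ∈ C i ∧
        p = ({Sum.inr i.castSucc, Sum.inl v}, Sum.inr i.succ)} ∪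
      {p | ∃ v w : V, Conflict C v w ∧
        p = ({Sum.inl v, Sum.inl w}, Sum.inr (Fin.last m))})

include hI

theorem chain_mem (A : Set (V ⊕ Fin (m + 1))) :
    ∀ n (j : Fin (m + 1)), j.val ≤ n →
      (∃ k : Fin m, k.succ ≤ j ∧ Sum.inr k.castSucc ∈ A ∧
        ∀ t : Fin m, k ≤ t → t.succ ≤ j → ∃ v ∈ C t, Sum.inl v ∈ A) →
      Sum.inr j ∈ clI I A := by
  intro n
  induction n with
  | zero =>
    rintro j hj ⟨k, hk, -, -⟩
    have := Fin.le_def.mp hk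
    simp only [Fin.val_succ] at this
    omega
  | succ n ih =>
    rintro j hj ⟨k, hk1, hk2, hk3⟩
    have hkj : k.val + 1 ≤ j.val := by simpa [Fin.le_def] using hk1
    have htlt : j.val - 1 < m := by have := k.isLt; omega
    set t : Fin m := ⟨j.val - 1, htlt⟩ with ht
    have hts : t.succ = j := by
      apply Fin.ext
      simp [ht]
      omega
    have hkt : k ≤ t := Fin.le_def.mpr (by simp [ht]; omega)
    obtain ⟨v, hv, hvA⟩ := hk3 t hkt (le_of_eq hts)
    have hcast : Sum.inr t.castSucc ∈ clI I A := by
      by_cases hkt' : k = t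
      · subst hkt'
        exact subset_clI _ _ hk2
      · have hklt : k.val < t.val := lt_of_le_of_ne (Fin.le_def.mp hkt)
          (fun h => hkt' (Fin.ext h))
        refine ih t.castSucc (by simp [ht]; omega) ⟨k, ?_, hk2, ?_⟩
        · refine Fin.le_def.mpr ?_
          simp only [Fin.val_succ, Fin.coe_castSucc, ht, Fin.val_mk] at hklt ⊢
          omega
        · intro t' h1 h2
          refine hk3 t' h1 ?_
          have := Fin.le_def.mp h2
          simp only [Fin.val_succ, Fin.coe_castSucc, ht] at this
          exact Fin.le_def.mpr (by simp [Fin.val_succ]; omega)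
    have hp : (({Sum.inr t.castSucc, Sum.inl v} : Set (V ⊕ Fin (m + 1))),
        (Sum.inr t.succ : V ⊕ Fin (m + 1))) ∈ I := by
      rw [hI]; exact Or.inl ⟨t, v, hv, rfl⟩
    have hconc := impClosed_clI I A _ hp (by
      intro x hx
      simp only [Set.mem_insert_iff, Set.mem_singleton_iff] at hx
      rcases hx with rfl | rfl
      · exact hcast
      · exact subset_clI _ _ hvA)
    rwa [hts] at hconc

theorem reach_mem (A : Set (V ⊕ Fin (m + 1))) (j : Fin (m + 1))
    (h : Reach C A j) : Sum.inr j ∈ clI I A := by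
  rcases h with h | ⟨rfl, v, w, hvw, hv, hw⟩ | hchain
  · exact subset_clI _ _ h
  · have hp : (({Sum.inl v, Sum.inl w} : Set (V ⊕ Fin (m + 1))),
        (Sum.inr (Fin.last m) : V ⊕ Fin (m + 1))) ∈ I := by
      rw [hI]; exact Or.inr ⟨v, w, hvw, rfl⟩
    exact impClosed_clI I A _ hp (by
      intro x hx
      simp only [Set.mem_insert_iff, Set.mem_singleton_iff] at hx
      rcases hx with rfl | rfl
      · exact subset_clI _ _ hv
      · exact subset_clI _ _ hw)
  · exact chain_mem C I hI A j.val j le_rfl hchain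

theorem mem_reach (A : Set (V ⊕ Fin (m + 1))) (j : Fin (m + 1))
    (h : Sum.inr j ∈ clI I A) : Reach C A j := by
  classical
  set F : Set (V ⊕ Fin (m + 1)) :=
    {x | Sum.elim (fun v => Sum.inl v ∈ A) (fun j => Reach C A j) x} with hF
  have hclosed : ImpClosed I F := by
    intro p hp hsub
    rw [hI] at hp
    rcases hp with ⟨i, v, hv, rfl⟩ | ⟨v, w, hvw, rfl⟩
    · have hvA : Sum.inl v ∈ A := hsub (Set.mem_insert_of_mem _ rfl)
      have hcs : Reach C A i.castSucc := hsub (Set.mem_insert _ _)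
      show Reach C A i.succ
      rcases hcs with hcs | ⟨hlast, -⟩ | ⟨k, hk1, hk2, hk3⟩
      · refine Or.inr (Or.inr ⟨i, le_rfl, hcs, ?_⟩)
        intro t h1 h2
        have h2' := Fin.le_def.mp h2
        simp only [Fin.val_succ] at h2'
        have : t = i := Fin.ext (le_antisymm (by omega) (Fin.le_def.mp h1))
        subst this
        exact ⟨v, hv, hvA⟩
      · exfalso
        have := congrArg Fin.val hlast
        simp [Fin.val_last] at this
        have := i.isLt
        omega
      · refine Or.inr (Or.inr ⟨k, ?_, hk2, ?_⟩)
        · have := Fin.le_def.mp hk1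
          simp only [Fin.val_succ, Fin.coe_castSucc] at this
          exact Fin.le_def.mpr (by simp [Fin.val_succ]; omega)
        · intro t h1 h2
          have h2' := Fin.le_def.mp h2
          simp only [Fin.val_succ] at h2'
          by_cases hti : t = i
          · subst hti; exact ⟨v, hv, hvA⟩
          · have : t.val < i.val :=
              lt_of_le_of_ne (by omega) (fun h => hti (Fin.ext h))
            exact hk3 t h1 (Fin.le_def.mpr (by simp [Fin.val_succ]; omega))
    · have hvA : Sum.inl v ∈ A := hsub (Set.mem_insert _ _)
      have hwA : Sum.inl w ∈ A := hsub (Set.mem_insert_of_mem _ rfl)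
      exact Or.inr (Or.inl ⟨rfl, v, w, hvw, hvA, hwA⟩)
  have hAF : A ⊆ F := by
    intro x hx
    cases x with
    | inl v => exact hx
    | inr j => exact Or.inl hx
  exact clI_le I hclosed hAF h

/-- Characterization of membership of `c_j` in the closure. -/
theorem mem_clI_inr_iff (A : Set (V ⊕ Fin (m + 1))) (j : Fin (m + 1)) :
    Sum.inr j ∈ clI I A ↔ Reach C A j :=
  ⟨mem_reach C I hI A j, reach_mem C I hI A j⟩

end Aux

/-- in the first reduction, the minimal generators of `c_{m+1}`
are exactly the conflict pairs `{v, w}` and the inclusion-minimal sets of the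
form `T_i ∪ {c_i}` where `T_i ⊆ V` is a conflict-free 1-in-3 assignment of
`C_i, …, C_m`. -/
theorem stmt12 {V : Type*} [Fintype V] (m : ℕ)
    (C : Fin m → Finset V) (hC : ∀ j, (C j).card = 3)
    (I : Set (Set (V ⊕ Fin (m + 1)) × (V ⊕ Fin (m + 1))))
    (hI : I =
      {p | ∃ (i : Fin m) (v : V), v ∈ C i ∧
        p = ({Sum.inr i.castSucc, Sum.inl v}, Sum.inr i.succ)} ∪
      {p | ∃ v w : V, Conflict C v w ∧
        p = ({Sum.inl v, Sum.inl w}, Sum.inr (Fin.last m))})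
    (S : Set (Set (V ⊕ Fin (m + 1))))
    (hS : S = {A | ∃ (i : Fin m) (T : Set V), ConflictFree C T ∧
      OneInThreeFrom C i T ∧
      A = Sum.inl '' T ∪ {Sum.inr i.castSucc}}) :
    ∀ A : Set (V ⊕ Fin (m + 1)),
      MinGen (clI I) (Sum.inr (Fin.last m)) A ↔
        ((∃ v w : V, Conflict C v w ∧ A = {Sum.inl v, Sum.inl w}) ∨
          (A ∈ S ∧ ∀ A' ∈ S, A' ⊆ A → A' = A)) := by
  classical
  have hchar := mem_clI_inr_iff C I hI
  -- `c_{m+1}` is generated by any element of `S`.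
  have hSgen : ∀ A' ∈ S, Sum.inr (Fin.last m) ∈ clI I A' := by
    intro A' hA'
    rw [hS] at hA'
    obtain ⟨i, T, hcf, h13, rfl⟩ := hA'
    rw [hchar]
    refine Or.inr (Or.inr ⟨i, ?_, Or.inr rfl, ?_⟩)
    · exact Fin.le_def.mpr (by simp [Fin.val_succ, Fin.val_last])
    · intro t ht _
      obtain ⟨v, ⟨hvT, hvC⟩, -⟩ := h13 t ht
      exact ⟨v, hvC, Or.inl ⟨v, hvT, rfl⟩⟩
  -- no element of `S` contains `c_{m+1}`
  have hSnc : ∀ A' ∈ S, (Sum.inr (Fin.last m) : V ⊕ Fin (m + 1)) ∉ A' := by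
    intro A' hA' hc
    rw [hS] at hA'
    obtain ⟨i, T, -, -, rfl⟩ := hA'
    rcases hc with ⟨v, -, hv⟩ | hc
    · exact Sum.inl_ne_inr hv
    · simp only [Set.mem_singleton_iff, Sum.inr.injEq] at hc
      have := congrArg Fin.val hc
      simp [Fin.val_last] at this
      have := i.isLt
      omega
  intro A
  constructor
  · rintro ⟨hc, hgen, hmin⟩
    rw [hchar] at hgen
    rcases hgen with h | ⟨-, v, w, hvw, hv, hw⟩ | ⟨k, -, hk2, hk3⟩
    · exact absurd h hc
    · -- conflict pair case
      left
      refine ⟨v, w, hvw, ?_⟩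
      have hsub : ({Sum.inl v, Sum.inl w} : Set (V ⊕ Fin (m + 1))) ⊆ A := by
        intro x hx
        rcases hx with rfl | rfl
        · exact hv
        · exact hw
      by_contra hne
      have hss : ({Sum.inl v, Sum.inl w} : Set (V ⊕ Fin (m + 1))) ⊂ A :=
        HasSubset.Subset.ssubset_of_ne hsub (fun h => hne h.symm)
      exact hmin _ hss ((hchar _ _).mpr
        (Or.inr (Or.inl ⟨rfl, v, w, hvw, by simp, by simp⟩)))
    · -- chain case
      right
      set T : Set V := {v | Sum.inl v ∈ A} with hT
      -- every variable in a clause `t ≥ k` meets `T`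
      have hTmeet : ∀ t : Fin m, k ≤ t → ∃ v ∈ C t, v ∈ T := by
        intro t ht
        obtain ⟨v, hvC, hvA⟩ := hk3 t ht (Fin.le_def.mpr
          (by simp [Fin.val_succ, Fin.val_last]))
        exact ⟨v, hvC, hvA⟩
      -- `T` is conflict-free
      have hcf : ConflictFree C T := by
        intro v hv w hw hvw
        have hsub : ({Sum.inl v, Sum.inl w} : Set (V ⊕ Fin (m + 1))) ⊆ A := by
          intro x hx
          rcases hx with rfl | rfl
          · exact hv
          · exact hw
        have hss : ({Sum.inl v, Sum.inl w} : Set (V ⊕ Fin (m + 1))) ⊂ A := by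
          refine HasSubset.Subset.ssubset_of_ne hsub (fun h => ?_)
          have : (Sum.inr k.castSucc : V ⊕ Fin (m + 1)) ∈
              ({Sum.inl v, Sum.inl w} : Set (V ⊕ Fin (m + 1))) := h ▸ hk2
          rcases this with h' | h'
          · exact Sum.inr_ne_inl h'
          · exact Sum.inr_ne_inl h'
        exact hmin _ hss ((hchar _ _).mpr
          (Or.inr (Or.inl ⟨rfl, v, w, hvw, by simp, by simp⟩)))
      -- `T` is a 1-in-3 assignment from `k`
      have h13 : OneInThreeFrom C k T := by
        intro t ht
        obtain ⟨v, hvC, hvT⟩ := hTmeet t ht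
        refine ⟨v, ⟨hvT, hvC⟩, ?_⟩
        rintro w ⟨hwT, hwC⟩
        by_contra hne
        exact hcf w hwT v hvT ⟨hne, t, hwC, hvC⟩
      -- `A` has exactly the form `inl '' T ∪ {inr k.castSucc}`
      have hAeq : A = Sum.inl '' T ∪ {Sum.inr k.castSucc} := by
        apply Set.Subset.antisymm
        · intro x hx
          cases x with
          | inl v => exact Or.inl ⟨v, hx, rfl⟩
          | inr t =>
            right
            simp only [Set.mem_singleton_iff, Sum.inr.injEq]
            by_contra hne
            -- delete `inr t` from `A`: still generates
            have hss : A \ {Sum.inr t} ⊂ A := by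
              refine Set.sdiff_singleton_ssubset.mpr hx
            refine hmin _ hss ((hchar _ _).mpr (Or.inr (Or.inr
              ⟨k, Fin.le_def.mpr (by simp [Fin.val_succ, Fin.val_last]),
                ⟨hk2, fun h => hne (Sum.inr.inj h).symm⟩, ?_⟩)))
            intro t' ht' _
            obtain ⟨v, hvC, hvT⟩ := hTmeet t' ht'
            exact ⟨v, hvC, ⟨hvT, fun h => Sum.inl_ne_inr h⟩⟩
        · intro x hx
          rcases hx with ⟨v, hv, rfl⟩ | hx
          · exact hv
          · simp only [Set.mem_singleton_iff] at hx
            exact hx ▸ hk2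
      have hAS : A ∈ S := by
        rw [hS]
        exact ⟨k, T, hcf, h13, hAeq⟩
      refine ⟨hAS, ?_⟩
      intro A' hA' hsub
      by_contra hne
      exact hmin A' (HasSubset.Subset.ssubset_of_ne hsub hne) (hSgen A' hA')
  · rintro (⟨v, w, hvw, rfl⟩ | ⟨hAS, hminS⟩)
    · -- conflict pair is a minimal generator
      refine ⟨?_, ?_, ?_⟩
      · rintro (h | h)
        · exact Sum.inr_ne_inl h
        · exact Sum.inr_ne_inl h
      · exact (hchar _ _).mpr (Or.inr (Or.inl ⟨rfl, v, w, hvw, by simp, by simp⟩))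
      · intro A' hA' hgen
        rw [hchar] at hgen
        rcases hgen with h | ⟨-, v', w', hvw', hv', hw'⟩ | ⟨k, -, hk2, -⟩
        · rcases hA'.1 h with h' | h'
          · exact Sum.inr_ne_inl h'
          · exact Sum.inr_ne_inl h'
        · -- the conflict pair in `A'` must be all of `{inl v, inl w}`
          have hveq : Sum.inl v' = Sum.inl v ∨ Sum.inl v' = Sum.inl w := hA'.1 hv'
          have hweq : Sum.inl w' = Sum.inl v ∨ Sum.inl w' = Sum.inl w := hA'.1 hw'
          have hne : Sum.inl v' ≠ (Sum.inl w' : V ⊕ Fin (m + 1)) := by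
            intro h
            exact hvw'.1 (Sum.inl.inj h)
          have hfull : ({Sum.inl v, Sum.inl w} : Set (V ⊕ Fin (m + 1))) ⊆ A' := by
            rcases hveq with hveq | hveq <;> rcases hweq with hweq | hweq
            · exact absurd (hveq.trans hweq.symm) hne
            · intro x hx
              rcases hx with rfl | rfl
              · exact hveq ▸ hv'
              · exact hweq ▸ hw'
            · intro x hx
              rcases hx with rfl | rfl
              · exact hweq ▸ hw'
              · exact hveq ▸ hv'
            · exact absurd (hveq.trans hweq.symm) hne
          exact hA'.2 hfull
        · rcases hA'.1 hk2 with h' | h'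
          · exact Sum.inr_ne_inl h'
          · exact Sum.inr_ne_inl h'
    · -- minimal element of `S` is a minimal generator
      refine ⟨hSnc A hAS, hSgen A hAS, ?_⟩
      intro A' hA' hgen
      rw [hS] at hAS
      obtain ⟨i, T, hcf, h13, hAeq⟩ := hAS
      rw [hchar] at hgen
      rcases hgen with h | ⟨-, v, w, hvw, hv, hw⟩ | ⟨k, -, hk2, hk3⟩
      · -- `inr last ∈ A'` impossible
        have := hA'.1 h
        rw [hAeq] at this
        rcases this with ⟨v, -, hv⟩ | hv
        · exact Sum.inl_ne_inr hv
        · simp only [Set.mem_singleton_iff, Sum.inr.injEq] at hv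
          have := congrArg Fin.val hv
          simp [Fin.val_last] at this
          have := i.isLt
          omega
      · -- conflict pair in `A' ⊆ A` contradicts conflict-freeness of `T`
        have hvA := hA'.1 hv
        have hwA := hA'.1 hw
        rw [hAeq] at hvA hwA
        have hvT : v ∈ T := by
          rcases hvA with ⟨v', hv', h⟩ | h
          · exact (Sum.inl.inj h) ▸ hv'
          · exact absurd h (by simp)
        have hwT : w ∈ T := by
          rcases hwA with ⟨w', hw', h⟩ | h
          · exact (Sum.inl.inj h) ▸ hw'
          · exact absurd h (by simp)
        exact hcf v hvT w hwT hvw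
      · -- chain in `A'`: build a smaller element of `S`
        have hkA := hA'.1 hk2
        rw [hAeq] at hkA
        have hki : k = i := by
          rcases hkA with ⟨v', -, h⟩ | h
          · exact absurd h (by simp)
          · simp only [Set.mem_singleton_iff, Sum.inr.injEq] at h
            exact Fin.castSucc_injective m h
        subst hki
        set T' : Set V := {v | Sum.inl v ∈ A'} with hT'
        have hT'sub : T' ⊆ T := by
          intro v hv
          have := hA'.1 hv
          rw [hAeq] at this
          rcases this with ⟨v', hv', h⟩ | h
          · exact (Sum.inl.inj h) ▸ hv'
          · exact absurd h (by simp)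
        have hcf' : ConflictFree C T' := fun v hv w hw =>
          hcf v (hT'sub hv) w (hT'sub hw)
        have h13' : OneInThreeFrom C k T' := by
          intro t ht
          obtain ⟨v, hvC, hvA'⟩ := hk3 t ht (Fin.le_def.mpr
            (by simp [Fin.val_succ, Fin.val_last]))
          refine ⟨v, ⟨hvA', hvC⟩, ?_⟩
          rintro w ⟨hwT, hwC⟩
          by_contra hne
          exact hcf' w hwT v hvA' ⟨hne, t, hwC, hvC⟩
        have hBS : Sum.inl '' T' ∪ {Sum.inr k.castSucc} ∈ S := by
          rw [hS]
          exact ⟨k, T', hcf', h13', rfl⟩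
        have hBsub : Sum.inl '' T' ∪ {Sum.inr k.castSucc} ⊆ A := by
          rintro x (⟨v, hv, rfl⟩ | hx)
          · exact hA'.1 hv
          · simp only [Set.mem_singleton_iff] at hx
            exact hx ▸ hA'.1 hk2
        have hBeq := hminS _ hBS hBsub
        -- then `A ⊆ A'`, contradicting `A' ⊂ A`
        have hAA' : A ⊆ A' := by
          rw [← hBeq]
          rintro x (⟨v, hv, rfl⟩ | hx)
          · exact hv
          · simp only [Set.mem_singleton_iff] at hx
            exact hx ▸ hk2
        exact hA'.2 hAA'
end
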